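/- arXiv:2006.01084 — 8 statements merged into one kernel-verified Lean document; each statement's English description precedes it below -/
import Mathlib

section
/- If U is an ultrafilter over a set X whose ultrapower embedding j_U has critical point κ (i.e., U is κ-complete but not κ⁺-complete), then there is a surjection from X onto κ. -/
/-!
If `#X < κ`, then `κ`-completeness applied to the sets `X \ {x}` forces `U` to be principal, and a
principal ultrafilter is closed under intersections of any size, so `U` would be `κ⁺`-complete.
Hence `κ ≤ #X`; and `κ` is infinite, since every filter is closed under finite intersections.
-/

open Cardinal Filter Function Set

universe u

variable {α : Type u}

theorem Filter.cardinalInterFilter_iff_iInter_mem {l : Filter α} {c : Cardinal.{u}} :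
    CardinalInterFilter l c ↔ ∀ (ι : Type u) (s : ι → Set α),
      #ι < c → (∀ i, s i ∈ l) → (⋂ i, s i) ∈ l := by
  refine ⟨fun _ ι s hι ↦ (cardinal_iInter_mem hι).2, fun h ↦ ⟨fun S hS hmem ↦ ?_⟩⟩
  rw [sInter_eq_iInter]
  exact h S _ hS fun s ↦ hmem s s.2

theorem Filter.aleph0_lt_of_not_cardinalInterFilter {l : Filter α} {c : Cardinal.{u}}
    (h : ¬ CardinalInterFilter l c) : ℵ₀ < c := by
  by_contra! hc
  have := cardinalInterFilter_aleph0 l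
  exact h (CardinalInterFilter.of_cardinalInterFilter_of_le l hc)

namespace Ultrafilter

instance cardinalInterFilter_pure (x : α) (c : Cardinal.{u}) :
    CardinalInterFilter ((pure x : Ultrafilter α) : Filter α) c := by
  rw [coe_pure, ← principal_singleton]
  infer_instance

theorem exists_eq_pure_of_mk_lt (U : Ultrafilter α) {c : Cardinal.{u}}
    [CardinalInterFilter (U : Filter α) c] (h : #α < c) : ∃ x, U = pure x := by
  have hempty : (⋂ x : α, ({x}ᶜ : Set α)) = ∅ := by
    ext x
    simp
  obtain ⟨x, hx⟩ : ∃ x, ({x}ᶜ : Set α) ∉ U := by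
    by_contra! hall
    exact U.empty_notMem (hempty ▸ (cardinal_iInter_mem h).2 hall)
  obtain ⟨y, -, hU⟩ := U.eq_pure_of_finite_mem (finite_singleton x) (U.compl_notMem_iff.1 hx)
  exact ⟨y, hU⟩

theorem le_mk_of_not_cardinalInterFilter (U : Ultrafilter α) {c d : Cardinal.{u}}
    [CardinalInterFilter (U : Filter α) c] (h : ¬ CardinalInterFilter (U : Filter α) d) :
    c ≤ #α := by
  by_contra! hα
  obtain ⟨x, rfl⟩ := U.exists_eq_pure_of_mk_lt hα
  exact h inferInstance

end Ultrafilter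

theorem Cardinal.exists_surjective_of_mk_le {β : Type u} [Nonempty β] (h : #β ≤ #α) :
    ∃ f : α → β, Surjective f :=
  exists_surjective_iff.2 ⟨inferInstance, h⟩

/-- If `U` is an ultrafilter over a set `X` whose ultrapower embedding has
critical point `κ` (i.e. `U` is `κ`-complete but not `κ⁺`-complete), then there is a
surjection from `X` onto `κ`. -/
theorem stmt0 {X : Type u} (U : Ultrafilter X) (κ : Cardinal.{u})
    (hcomp : ∀ (ι : Type u) (f : ι → Set X),
      Cardinal.mk ι < κ → (∀ i, f i ∈ U) → (⋂ i, f i) ∈ U)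
    (hnot : ¬ ∀ (ι : Type u) (f : ι → Set X),
      Cardinal.mk ι < Order.succ κ → (∀ i, f i ∈ U) → (⋂ i, f i) ∈ U) :
    ∃ g : X → Quotient.out κ, Function.Surjective g := by
  have : CardinalInterFilter (U : Filter X) κ := cardinalInterFilter_iff_iInter_mem.2 hcomp
  replace hnot : ¬ CardinalInterFilter (U : Filter X) (Order.succ κ) :=
    fun h ↦ hnot (cardinalInterFilter_iff_iInter_mem.1 h)
  have hκX : κ ≤ #X := U.le_mk_of_not_cardinalInterFilter hnot
  have hκ : ℵ₀ ≤ κ := Order.lt_succ_iff.1 (aleph0_lt_of_not_cardinalInterFilter hnot)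
  have : Nonempty κ.out := mk_ne_zero_iff.1 <| by rw [mk_out]; exact (aleph0_pos.trans_le hκ).ne'
  exact exists_surjective_of_mk_le (by rwa [mk_out])
end

section
/- The Ketonen order on countably complete ultrafilters over an ordinal δ is transitive and antisymmetric: if U ⊴ W via a W-limit of ultrafilters concentrating on initial segments, and W ⊴ Z, then U ⊴ Z; and if U ⊴ W and W ⊴ U then U = W. -/
/-- An ultrafilter is countably complete if it is closed under countable intersections. -/
def CComplete {T : Type*} (U : Ultrafilter T) : Prop :=
  ∀ f : ℕ → Set T, (∀ n, f n ∈ U) → (⋂ n, f n) ∈ U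

/-- The Ketonen order on ultrafilters over the ordinal `δ`: `U ⊴ W` iff
`U = W-lim_{α<δ} Z_α` where each `Z_α` is countably complete and concentrates on `α+1`
(i.e. contains the set of ordinals `≤ α`). -/
def KetLE (δ : Ordinal.{u}) (U W : Ultrafilter {α : Ordinal.{u} // α < δ}) : Prop :=
  ∃ Z : {α : Ordinal.{u} // α < δ} → Ultrafilter {α : Ordinal.{u} // α < δ},
    (∀ α, CComplete (Z α)) ∧ (∀ α, Set.Iic α ∈ Z α) ∧
    ∀ A : Set {α : Ordinal.{u} // α < δ}, A ∈ U ↔ {α | A ∈ Z α} ∈ W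

/-- The limit `W-lim Z` of a family of ultrafilters along an ultrafilter. -/
def limUF {T : Type*} (W : Ultrafilter T) (Z : T → Ultrafilter T) : Ultrafilter T :=
  Ultrafilter.ofComplNotMemIff
    { sets := {A | {α | A ∈ Z α} ∈ W}
      univ_sets := Filter.mem_of_superset Filter.univ_mem fun α _ => Filter.univ_mem
      sets_of_superset := fun {A B} hA hAB =>
        Filter.mem_of_superset hA fun α hα => Filter.mem_of_superset hα hAB
      inter_sets := fun {A B} hA hB =>
        Filter.mem_of_superset (Filter.inter_mem hA hB) fun α ⟨h1, h2⟩ =>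
          Filter.inter_mem h1 h2 }
    (by
      intro s
      have : {α | sᶜ ∈ Z α} = {α | s ∈ Z α}ᶜ := by
        ext α; simp [Ultrafilter.compl_mem_iff_notMem]
      constructor
      · intro h
        have h2 : {α | s ∈ Z α}ᶜ ∉ W := by
          rw [← this]; exact h
        simpa [Ultrafilter.compl_mem_iff_notMem] using h2
      · intro hs hc
        have : {α | s ∈ Z α}ᶜ ∈ W := this ▸ hc
        exact (Ultrafilter.compl_mem_iff_notMem.mp this) hs)

lemma mem_limUF {T : Type*} {W : Ultrafilter T} {Z : T → Ultrafilter T} {A : Set T} :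
    A ∈ limUF W Z ↔ {α | A ∈ Z α} ∈ W := Iff.rfl

lemma cc_limUF {T : Type*} {W : Ultrafilter T} {Z : T → Ultrafilter T}
    (hW : CComplete W) (hZ : ∀ α, CComplete (Z α)) : CComplete (limUF W Z) := by
  intro f hf
  rw [mem_limUF]
  have : (⋂ n, {α | f n ∈ Z α}) ∈ W := hW _ fun n => hf n
  refine Filter.mem_of_superset this fun α hα => ?_
  exact hZ α f fun n => Set.mem_iInter.mp hα n

/-- Key lemma: if `U = U-lim X` with `X α` countably complete concentrating on `Iic α`,
then `X α` is principal at `α` for `U`-almost all `α`. -/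
lemma key {δ : Ordinal.{u}} (U : Ultrafilter {α : Ordinal.{u} // α < δ}) (hU : CComplete U)
    (X : {α : Ordinal.{u} // α < δ} → Ultrafilter {α : Ordinal.{u} // α < δ})
    (hcc : ∀ α, CComplete (X α)) (hIic : ∀ α, Set.Iic α ∈ X α)
    (hlim : ∀ A, A ∈ U ↔ {α | A ∈ X α} ∈ U) :
    {α | ({α} : Set _) ∈ X α} ∈ U := by
  by_contra hT
  have hS : {α | ({α} : Set _) ∈ X α}ᶜ ∈ U := Ultrafilter.compl_mem_iff_notMem.mpr hT
  set S := {α : {α : Ordinal.{u} // α < δ} | ({α} : Set _) ∈ X α}ᶜ with hSdef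
  -- For α ∈ S, Iio α ∈ X α
  have hIio : ∀ α ∈ S, Set.Iio α ∈ X α := by
    intro α hα
    have h1 : ({α} : Set _)ᶜ ∈ X α := Ultrafilter.compl_mem_iff_notMem.mpr hα
    have h2 : Set.Iic α ∩ ({α} : Set _)ᶜ ∈ X α := Filter.inter_mem (hIic α) h1
    refine Filter.mem_of_superset h2 fun β ⟨hle, hne⟩ => ?_
    exact lt_of_le_of_ne hle (by simpa using hne)
  -- Build a decreasing sequence of sets in U
  let B : ℕ → Set {α : Ordinal.{u} // α < δ} := fun n =>
    Nat.rec S (fun _ Bn => Bn ∩ {α | Bn ∈ X α}) n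
  have hB : ∀ n, B n ∈ U := by
    intro n
    induction n with
    | zero => exact hS
    | succ n ih => exact Filter.inter_mem ih ((hlim _).mp ih)
  have hBω : (⋂ n, B n) ∈ U := hU B hB
  -- Take the minimal element of ⋂ B n
  have hne : (⋂ n, B n).Nonempty := Ultrafilter.nonempty_of_mem hBω
  obtain ⟨α, hαmem, hαmin⟩ := (IsWellFounded.wf (α := {α : Ordinal.{u} // α < δ})
    (r := (· < ·))).has_min _ hne
  have hαS : α ∈ S := by
    have := Set.mem_iInter.mp hαmem 0
    exact this
  have hXB : ∀ n, B n ∈ X α := by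
    intro n
    have := Set.mem_iInter.mp hαmem (n + 1)
    exact this.2
  have hBωX : (⋂ n, B n) ∈ X α := hcc α B hXB
  have : ((⋂ n, B n) ∩ Set.Iio α) ∈ X α := Filter.inter_mem hBωX (hIio α hαS)
  obtain ⟨β, hβ1, hβ2⟩ := Ultrafilter.nonempty_of_mem this
  exact hαmin β hβ1 hβ2

/-- The Ketonen order on countably complete ultrafilters over an ordinal `δ`
is transitive and antisymmetric. -/
theorem stmt3 (δ : Ordinal.{u}) (U W Z : Ultrafilter {α : Ordinal.{u} // α < δ})
    (hU : CComplete U) (hW : CComplete W) (hZ : CComplete Z) :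
    (KetLE δ U W → KetLE δ W Z → KetLE δ U Z) ∧
    (KetLE δ U W → KetLE δ W U → U = W) := by
  constructor
  · rintro ⟨Z1, hZ1cc, hZ1Iic, hZ1⟩ ⟨Y, hYcc, hYIic, hY⟩
    refine ⟨fun α => limUF (Y α) Z1, fun α => cc_limUF (hYcc α) hZ1cc, ?_, ?_⟩
    · intro α
      rw [mem_limUF]
      refine Filter.mem_of_superset (hYIic α) fun β hβ => ?_
      exact Filter.mem_of_superset (hZ1Iic β) (Set.Iic_subset_Iic.mpr hβ)
    · intro A
      rw [hZ1 A, hY _]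
      rfl
  · rintro ⟨Z1, hZ1cc, hZ1Iic, hZ1⟩ ⟨Y, hYcc, hYIic, hY⟩
    -- the composition is a self-limit of U
    set X : {α : Ordinal.{u} // α < δ} → Ultrafilter {α : Ordinal.{u} // α < δ} :=
      fun α => limUF (Y α) Z1 with hXdef
    have hlim : ∀ A, A ∈ U ↔ {α | A ∈ X α} ∈ U := by
      intro A
      rw [hZ1 A, hY _]
      rfl
    have hXcc : ∀ α, CComplete (X α) := fun α => cc_limUF (hYcc α) hZ1cc
    have hXIic : ∀ α, Set.Iic α ∈ X α := by
      intro α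
      rw [mem_limUF]
      refine Filter.mem_of_superset (hYIic α) fun β hβ => ?_
      exact Filter.mem_of_superset (hZ1Iic β) (Set.Iic_subset_Iic.mpr hβ)
    have hT : {α | ({α} : Set _) ∈ X α} ∈ U := key U hU X hXcc hXIic hlim
    -- on this set, Y α is principal at α
    have hprin : ∀ α ∈ {α | ({α} : Set _) ∈ X α}, ({α} : Set _) ∈ Y α := by
      intro α hα
      have h1 : {β | ({α} : Set _) ∈ Z1 β} ∈ Y α := hα
      have h2 : {β | ({α} : Set _) ∈ Z1 β} ∩ Set.Iic α ∈ Y α :=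
        Filter.inter_mem h1 (hYIic α)
      refine Filter.mem_of_superset h2 fun β ⟨hβ1, hβ2⟩ => ?_
      -- {α} ∈ Z1 β and Iic β ∈ Z1 β force α ≤ β, with β ≤ α gives β = α
      have h3 : ({α} : Set _) ∩ Set.Iic β ∈ Z1 β := Filter.inter_mem hβ1 (hZ1Iic β)
      obtain ⟨γ, hγ1, hγ2⟩ := Ultrafilter.nonempty_of_mem h3
      have : α ≤ β := hγ1 ▸ hγ2
      exact le_antisymm hβ2 this
    refine Ultrafilter.coe_injective (Filter.ext fun B => ?_)
    rw [Ultrafilter.mem_coe, Ultrafilter.mem_coe, hY B]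
    constructor
    · intro h
      have h2 : B ∩ {α | ({α} : Set _) ∈ X α} ∈ U := Filter.inter_mem h hT
      refine Filter.mem_of_superset h2 fun α ⟨hα1, hα2⟩ => ?_
      exact Filter.mem_of_superset (hprin α hα2) (by simpa using hα1)
    · intro h
      have h2 : {α | B ∈ Y α} ∩ {α | ({α} : Set _) ∈ X α} ∈ U := Filter.inter_mem h hT
      refine Filter.mem_of_superset h2 fun α ⟨hα1, hα2⟩ => ?_
      have h3 : B ∩ ({α} : Set _) ∈ Y α := Filter.inter_mem hα1 (hprin α hα2)
      obtain ⟨γ, hγ1, hγ2⟩ := Ultrafilter.nonempty_of_mem h3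
      exact hγ2 ▸ hγ1
end

section
/- Assuming DC, the Ketonen order on countably complete filters over an ordinal is wellfounded: there is no infinite descending sequence F_0 ▷ F_1 ▷ ⋯ where F ◁ G means F ⊆ G-lim_{α<δ} F_α with each F_α a countably complete filter over δ containing α. -/
/-!
Fix witnesses `Z n` for `F (n+1) ◁ F n` and let `S n ∈ F n` be the set of `α` at which `Z n α`
is a proper countably complete filter containing `Iio α`. Countable completeness of the `F n` and
`Z n α` lets us shrink `S n` to sets `B n ∈ F n` that cohere: `B (n+1) ∈ Z n α` for every
`α ∈ B n` (intersect the `ω` stages of the iteration `A n ↦ S n ∩ {α | A (n+1) ∈ Z n α}`).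
Then every `α ∈ B n` has some `β < α` in `B (n+1)`, so by well-foundedness all `B n` are empty,
although `B 0 ∈ F 0` and `F 0` is proper.
-/

/-- A filter is countably complete if it is closed under countable intersections. -/
def FCC {T : Type*} (F : Filter T) : Prop :=
  ∀ f : ℕ → Set T, (∀ n, f n ∈ F) → (⋂ n, f n) ∈ F

/-- The strict Ketonen order on countably complete filters over the ordinal `δ`:
`F ◁ G` iff `F ⊆ G-lim_{α<δ} Z_α` where for `G`-almost all `α`, `Z_α` is a (proper)
countably complete filter over `δ` containing `α` (i.e. the set of ordinals `< α`). -/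
def FKetLT (δ : Ordinal.{u}) (F G : Filter {α : Ordinal.{u} // α < δ}) : Prop :=
  ∃ Z : {α : Ordinal.{u} // α < δ} → Filter {α : Ordinal.{u} // α < δ},
    {α | FCC (Z α) ∧ (Z α).NeBot ∧ Set.Iio α ∈ Z α} ∈ G ∧
    ∀ A ∈ F, {α | A ∈ Z α} ∈ G

open Filter Set

section Coherent

variable {X : Type*} {F : ℕ → Filter X} {Z : ℕ → X → Filter X} {S : ℕ → Set X}

def coherentApprox (S : ℕ → Set X) (Z : ℕ → X → Filter X) : ℕ → ℕ → Set X
  | 0, n => S n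
  | k + 1, n => S n ∩ {α | coherentApprox S Z k (n + 1) ∈ Z n α}

theorem coherentApprox_mem (hS : ∀ n, S n ∈ F n)
    (hlim : ∀ n, ∀ A ∈ F (n + 1), {α | A ∈ Z n α} ∈ F n) :
    ∀ k n, coherentApprox S Z k n ∈ F n
  | 0, n => hS n
  | k + 1, n => inter_mem (hS n) (hlim n _ (coherentApprox_mem hS hlim k (n + 1)))

theorem exists_coherent_sets (hF : ∀ n, FCC (F n)) (hS : ∀ n, S n ∈ F n)
    (hlim : ∀ n, ∀ A ∈ F (n + 1), {α | A ∈ Z n α} ∈ F n)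
    (hZ : ∀ n, ∀ α ∈ S n, FCC (Z n α)) :
    ∃ B : ℕ → Set X, (∀ n, B n ∈ F n) ∧ (∀ n, B n ⊆ S n) ∧
      ∀ n, ∀ α ∈ B n, B (n + 1) ∈ Z n α := by
  refine ⟨fun n => ⋂ k, coherentApprox S Z k n,
    fun n => hF n _ fun k => coherentApprox_mem hS hlim k n,
    fun n α hα => mem_iInter.1 hα 0, fun n α hα => ?_⟩
  exact hZ n α (mem_iInter.1 hα 0) _ fun k => (mem_iInter.1 hα (k + 1)).2

end Coherent

theorem eq_empty_of_forall_exists_lt {X : Type*} [Preorder X] [WellFoundedLT X]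
    {B : ℕ → Set X} (h : ∀ n, ∀ α ∈ B n, ∃ β ∈ B (n + 1), β < α) (n : ℕ) : B n = ∅ := by
  suffices ∀ α n, α ∉ B n from eq_empty_iff_forall_notMem.2 fun α => this α n
  intro α
  induction α using WellFoundedLT.induction with
  | _ α ih =>
    intro n hα
    obtain ⟨β, hβ, hβα⟩ := h n α hα
    exact ih β hβα (n + 1) hβ

/-- (DC holds in Lean's metatheory.) The Ketonen order on countably
complete (proper) filters over an ordinal is wellfounded: there is no infinite
descending sequence `F₀ ▷ F₁ ▷ ⋯`. -/
theorem stmt6 :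
    ¬ ∃ (δ : Ordinal.{u}) (F : ℕ → Filter {α : Ordinal.{u} // α < δ}),
      (∀ n, (F n).NeBot) ∧ (∀ n, FCC (F n)) ∧ ∀ n, FKetLT δ (F (n + 1)) (F n) := by
  rintro ⟨δ, F, hNB, hFCC, hKet⟩
  choose Z hZS hZA using hKet
  obtain ⟨B, hBF, hBS, hBZ⟩ := exists_coherent_sets hFCC hZS hZA fun n α hα => hα.1
  have hdesc : ∀ n, ∀ α ∈ B n, ∃ β ∈ B (n + 1), β < α := fun n α hα =>
    have := (hBS n hα).2.1
    Filter.nonempty_of_mem (inter_mem (hBZ n α hα) (hBS n hα).2.2)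
  exact (Filter.nonempty_of_mem (hBF 0)).ne_empty (eq_empty_of_forall_exists_lt hdesc 0)
end

section
/- Suppose U is a countably complete ultrafilter whose ultrapower embedding j_U has a critical point. Then U is not internal to itself: there is no sequence of countably complete ultrafilters ⟨U_y : y ∈ Y⟩ (where Y is the underlying set of U) such that for all relations R ⊆ X × Y, (∀^U x ∀^U y R(x,y)) ⟺ (∀^U y ∀^{U_y} x R(x,y)). -/
open Filter Set

namespace Ultrafilter

variable {X Y : Type*}

-- `U ⊲ W` as witnessed by `Z`, without the countable completeness of the `Z y`.
def IsInternalVia (U : Ultrafilter X) (W : Ultrafilter Y) (Z : Y → Ultrafilter X) : Prop :=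
  ∀ R : X → Y → Prop, {x | {y | R x y} ∈ W} ∈ U ↔ {y | {x | R x y} ∈ Z y} ∈ W

theorem IsInternalVia.mem_iff {U : Ultrafilter X} {W : Ultrafilter Y} {Z : Y → Ultrafilter X}
    (h : U.IsInternalVia W Z) (A : Set X) : A ∈ U ↔ ∀ᶠ y in W, A ∈ Z y := by
  have hA : {x | {_y : Y | x ∈ A} ∈ W} = A :=
    Set.ext fun _ => eventually_const (f := (W : Filter Y))
  conv_lhs => rw [← hA]
  exact h fun x _ => x ∈ A

theorem iInter_mem_of_singleton_mem {U : Ultrafilter X} {p : X} (hp : {p} ∈ U) {ι : Sort*}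
    {f : ι → Set X} (hf : ∀ i, f i ∈ U) : ⋂ i, f i ∈ U := by
  have hpf : ∀ i, p ∈ f i := fun i => by
    obtain ⟨q, hq, hqf⟩ := U.nonempty_of_mem (inter_mem hp (hf i))
    rwa [mem_singleton_iff.1 hq] at hqf
  exact mem_of_superset hp (singleton_subset_iff.2 (mem_iInter.2 hpf))

theorem eventually_eventually_lt_of_injective {α : Type*} [LinearOrder α] [WellFoundedLT α]
    {U : Ultrafilter X} (hU : ∀ x, ({x} : Set X) ∉ U) {f : X → α} (hf : f.Injective) :
    ∀ᶠ x in U, ∀ᶠ y in U, f x < f y := by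
  by_contra h
  simp_rw [← eventually_not, not_lt] at h
  -- the least point `x₀` below which `U` concentrates would be an atom of `U`
  obtain ⟨x₀, hx₀, hmin⟩ := (InvImage.wf f wellFounded_lt).has_min _ (U.nonempty_of_mem h)
  apply hU x₀
  filter_upwards [hx₀, h] with y hyx₀ hy
  exact hf (le_antisymm hyx₀ (not_lt.1 (hmin y hy)))

theorem exists_mem_forall_mem_of_countablyComplete {U : Ultrafilter X} {Z : X → Ultrafilter X}
    (hU : CComplete U) (hZ : ∀ y, CComplete (Z y)) (hlim : ∀ A ∈ U, ∀ᶠ y in U, A ∈ Z y)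
    {D : Set X} (hD : D ∈ U) : ∃ E ∈ U, E ⊆ D ∧ ∀ y ∈ E, E ∈ Z y := by
  let Es : ℕ → Set X := fun n => Nat.rec D (fun _ E => E ∩ {y | E ∈ Z y}) n
  have hEs : ∀ n, Es n ∈ U := fun n => by
    induction n with
    | zero => exact hD
    | succ n ih => exact inter_mem ih (hlim _ ih)
  refine ⟨⋂ n, Es n, hU Es hEs, iInter_subset Es 0, fun y hy => hZ y Es fun n => ?_⟩
  exact (mem_iInter.1 hy (n + 1)).2

end Ultrafilter

open Ultrafilter in
theorem stmt7_general {X : Type u} (U : Ultrafilter X) (hcc : CComplete U) (κ : Cardinal.{u})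
    (hnot : ¬ ∀ (ι : Type u) (f : ι → Set X),
      Cardinal.mk ι < Order.succ κ → (∀ i, f i ∈ U) → (⋂ i, f i) ∈ U) :
    ¬ ∃ Z : X → Ultrafilter X, (∀ y, CComplete (Z y)) ∧
      ∀ R : X → X → Prop,
        ({x | {y | R x y} ∈ U} ∈ U ↔ {y | {x | R x y} ∈ Z y} ∈ U) := by
  rintro ⟨Z, hZcc, hZ⟩
  have hU : ∀ x, ({x} : Set X) ∉ U := fun x hx =>
    hnot fun _ _ _ hf => iInter_mem_of_singleton_mem hx hf
  let f : X ↪ Cardinal.{u} := embeddingToCardinal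
  have hbelow : ∀ᶠ y in U, ∀ᶠ x in Z y, f x < f y :=
    (hZ fun x y => f x < f y).1 (eventually_eventually_lt_of_injective hU f.injective)
  obtain ⟨E, hEU, hEbelow, hEZ⟩ := exists_mem_forall_mem_of_countablyComplete hcc hZcc
    (fun A => (IsInternalVia.mem_iff hZ A).1) hbelow
  obtain ⟨y, hyE, hymin⟩ := (InvImage.wf f wellFounded_lt).has_min E (U.nonempty_of_mem hEU)
  obtain ⟨x, hxE, hxy⟩ := (Z y).nonempty_of_mem (inter_mem (hEZ y hyE) (hEbelow hyE))
  exact hymin x hxE hxy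

/-- If `U` is a countably complete ultrafilter whose ultrapower embedding
has a critical point (i.e. `U` is `κ`-complete but not `κ⁺`-complete for some cardinal `κ`),
then `U` is not internal to itself: there is no sequence `⟨U_y : y ∈ X⟩` of countably
complete ultrafilters such that for every relation `R ⊆ X × X`,
`(∀^U x ∀^U y R(x,y)) ↔ (∀^U y ∀^{U_y} x R(x,y))`. -/
theorem stmt7 {X : Type u} (U : Ultrafilter X) (hcc : CComplete U) (κ : Cardinal.{u})
    (hcomp : ∀ (ι : Type u) (f : ι → Set X),
      Cardinal.mk ι < κ → (∀ i, f i ∈ U) → (⋂ i, f i) ∈ U)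
    (hnot : ¬ ∀ (ι : Type u) (f : ι → Set X),
      Cardinal.mk ι < Order.succ κ → (∀ i, f i ∈ U) → (⋂ i, f i) ∈ U) :
    ¬ ∃ Z : X → Ultrafilter X, (∀ y, CComplete (Z y)) ∧
      ∀ R : X → X → Prop,
        ({x | {y | R x y} ∈ U} ∈ U ↔ {y | {x | R x y} ∈ Z y} ∈ U) :=
  stmt7_general U hcc κ hnot
end

section
/- Let ⟨𝔹_n, h_{n,m} : 𝔹_n → 𝔹_m⟩_{m ≤ n < ω} be an inverse system of complete Boolean algebras and σ-maps (maps preserving 0, 1, and countable meets). Suppose for each n, ἀ_n is a 𝔹_n-Boolean-valued name for an ordinal. Then the countable meet ⋀_{n<ω} h_{n,0}(⟦ἀ_{n+1} < ἀ_n⟧_{h_{n+1,n}}) equals 0, where ⟦ἀ_0 < ἀ_1⟧_h = ⋁_β h(⟦ἀ_0 < β⟧) · ⟦ἀ_1 = β⟧. -/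
/-- A σ-map between complete Boolean algebras preserves `⊥`, `⊤`, and countable meets. -/
def SigmaMap {β : Type u} {γ : Type v} [CompleteBooleanAlgebra β] [CompleteBooleanAlgebra γ]
    (h : β → γ) : Prop :=
  h ⊥ = ⊥ ∧ h ⊤ = ⊤ ∧ ∀ f : ℕ → β, h (⨅ n, f n) = ⨅ n, h (f n)

section Stmt8Aux

theorem Stmt8Aux.pair_iInf {α : Type*} [CompleteLattice α] (x y : α) :
    (⨅ n : ℕ, if n = 0 then x else y) = x ⊓ y := by
  apply le_antisymm
  · exact le_inf (by simpa using iInf_le (fun n : ℕ => if n = 0 then x else y) 0)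
      (by simpa using iInf_le (fun n : ℕ => if n = 0 then x else y) 1)
  · refine le_iInf fun n => ?_
    by_cases hn : n = 0 <;> simp [hn]

theorem SigmaMap.map_inf {α : Type*} {δ : Type*} [CompleteBooleanAlgebra α]
    [CompleteBooleanAlgebra δ] {h : α → δ} (hs : SigmaMap h) (a b : α) :
    h (a ⊓ b) = h a ⊓ h b := by
  have key := hs.2.2 (fun n => if n = 0 then a else b)
  rw [Stmt8Aux.pair_iInf] at key
  simp only [apply_ite h] at key
  rw [Stmt8Aux.pair_iInf] at key
  exact key

theorem SigmaMap.mono {α : Type*} {δ : Type*} [CompleteBooleanAlgebra α]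
    [CompleteBooleanAlgebra δ] {h : α → δ} (hs : SigmaMap h) {a b : α} (hab : a ≤ b) :
    h a ≤ h b := by
  have : h a = h a ⊓ h b := by rw [← hs.map_inf, inf_eq_left.mpr hab]
  rw [this]; exact inf_le_right

namespace Stmt8Aux

variable {B : ℕ → Type u} [∀ n, CompleteBooleanAlgebra (B n)]

/-- `tt e n β = ⟦ἀ_n ≥ β⟧`. -/
def tt (e : ∀ n : ℕ, Ordinal.{v} → B n) (n : ℕ) (β : Ordinal.{v}) : B n :=
  ⨆ γ : Ordinal.{v}, ⨆ _ : β ≤ γ, e n γ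

/-- `ss e n β = ⟦ἀ_n < β⟧`. -/
def ss (e : ∀ n : ℕ, Ordinal.{v} → B n) (n : ℕ) (β : Ordinal.{v}) : B n :=
  ⨆ γ : Ordinal.{v}, ⨆ _ : γ < β, e n γ

/-- `aa h e n = ⟦ἀ_{n+1} < ἀ_n⟧`. -/
def aa (h : ∀ m n : ℕ, m ≤ n → B n → B m) (e : ∀ n : ℕ, Ordinal.{v} → B n) (n : ℕ) : B n :=
  ⨆ β : Ordinal.{v}, h n (n + 1) (Nat.le_succ n) (ss e (n + 1) β) ⊓ e n β

/-- `cc h e n = ⋀_{k ≥ n} h n k ⟦ἀ_{k+1} < ἀ_k⟧`. -/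
def cc (h : ∀ m n : ℕ, m ≤ n → B n → B m) (e : ∀ n : ℕ, Ordinal.{v} → B n) (n : ℕ) : B n :=
  ⨅ k : ℕ, ⨅ hk : n ≤ k, h n k hk (aa h e k)

theorem e_le_tt (e : ∀ n : ℕ, Ordinal.{v} → B n) {n : ℕ} {β γ : Ordinal.{v}} (hβγ : β ≤ γ) :
    e n γ ≤ tt e n β :=
  le_iSup₂ (f := fun (γ : Ordinal.{v}) (_ : β ≤ γ) => e n γ) γ hβγ

theorem tt_inf_e {e : ∀ n : ℕ, Ordinal.{v} → B n}
    (hdisj : ∀ (n : ℕ) (β γ : Ordinal.{v}), β ≠ γ → e n β ⊓ e n γ = ⊥)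
    {n : ℕ} {β γ : Ordinal.{v}} (hγβ : γ < β) : tt e n β ⊓ e n γ = ⊥ := by
  apply le_antisymm _ bot_le
  rw [tt, iSup_inf_eq]
  refine iSup_le fun δ => ?_
  rw [iSup_inf_eq]
  refine iSup_le fun hβδ => ?_
  exact (hdisj n δ γ fun hh => hγβ.not_ge (hh ▸ hβδ)).le

theorem ss_inf_tt {e : ∀ n : ℕ, Ordinal.{v} → B n}
    (hdisj : ∀ (n : ℕ) (β γ : Ordinal.{v}), β ≠ γ → e n β ⊓ e n γ = ⊥)
    {n : ℕ} {β γ : Ordinal.{v}} (hγβ : γ ≤ β) : ss e n γ ⊓ tt e n β = ⊥ := by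
  apply le_antisymm _ bot_le
  rw [ss, iSup_inf_eq]
  refine iSup_le fun δ => ?_
  rw [iSup_inf_eq]
  refine iSup_le fun hδγ => ?_
  rw [inf_comm]
  exact (tt_inf_e hdisj (hδγ.trans_le hγβ)).le

theorem aa_inf_tt {h : ∀ m n : ℕ, m ≤ n → B n → B m} {e : ∀ n : ℕ, Ordinal.{v} → B n}
    (hσ : ∀ (m n : ℕ) (hmn : m ≤ n), SigmaMap (h m n hmn))
    (hdisj : ∀ (n : ℕ) (β γ : Ordinal.{v}), β ≠ γ → e n β ⊓ e n γ = ⊥)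
    {n : ℕ} {β : Ordinal.{v}} :
    aa h e n ⊓ h n (n + 1) (Nat.le_succ n) (tt e (n + 1) β) ≤ tt e n (β + 1) := by
  rw [aa, iSup_inf_eq]
  refine iSup_le fun β' => ?_
  by_cases hb : β + 1 ≤ β'
  · exact (inf_le_left.trans inf_le_right).trans (e_le_tt e hb)
  · have hb' : β' ≤ β := by
      rw [not_le, Ordinal.add_one_eq_succ, Order.lt_succ_iff] at hb
      exact hb
    have key : ss e (n + 1) β' ⊓ tt e (n + 1) β = ⊥ := ss_inf_tt hdisj hb'
    have : (h n (n + 1) (Nat.le_succ n) (ss e (n + 1) β') ⊓ e n β') ⊓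
        h n (n + 1) (Nat.le_succ n) (tt e (n + 1) β) ≤ (⊥ : B n) := by
      calc (h n (n + 1) (Nat.le_succ n) (ss e (n + 1) β') ⊓ e n β') ⊓
            h n (n + 1) (Nat.le_succ n) (tt e (n + 1) β)
          ≤ h n (n + 1) (Nat.le_succ n) (ss e (n + 1) β') ⊓
            h n (n + 1) (Nat.le_succ n) (tt e (n + 1) β) := inf_le_inf_right _ inf_le_left
        _ = h n (n + 1) (Nat.le_succ n) (ss e (n + 1) β' ⊓ tt e (n + 1) β) :=
            ((hσ n (n + 1) (Nat.le_succ n)).map_inf _ _).symm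
        _ = h n (n + 1) (Nat.le_succ n) ⊥ := by rw [key]
        _ = ⊥ := (hσ n (n + 1) (Nat.le_succ n)).1
    exact this.trans bot_le

theorem cc_le_aa {h : ∀ m n : ℕ, m ≤ n → B n → B m} {e : ∀ n : ℕ, Ordinal.{v} → B n}
    (hid : ∀ (n : ℕ) (hnn : n ≤ n) (b : B n), h n n hnn b = b) (n : ℕ) :
    cc h e n ≤ aa h e n := by
  calc cc h e n ≤ h n n le_rfl (aa h e n) :=
        (iInf_le (fun k => ⨅ hk : n ≤ k, h n k hk (aa h e k)) n).trans (iInf_le _ le_rfl)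
    _ = aa h e n := hid n le_rfl _

theorem cc_le_h {h : ∀ m n : ℕ, m ≤ n → B n → B m} {e : ∀ n : ℕ, Ordinal.{v} → B n}
    (hσ : ∀ (m n : ℕ) (hmn : m ≤ n), SigmaMap (h m n hmn))
    (hco : ∀ (m n p : ℕ) (hmn : m ≤ n) (hnp : n ≤ p) (b : B p),
      h m n hmn (h n p hnp b) = h m p (hmn.trans hnp) b)
    {n m : ℕ} (hnm : n ≤ m) : cc h e n ≤ h n m hnm (cc h e m) := by
  simp only [cc]
  rw [(hσ n m hnm).2.2 (fun k => ⨅ hk : m ≤ k, h m k hk (aa h e k))]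
  refine le_iInf fun k => ?_
  by_cases hk : m ≤ k
  · have heq : (⨅ hk' : m ≤ k, h m k hk' (aa h e k)) = h m k hk (aa h e k) :=
      le_antisymm (iInf_le _ hk) (le_iInf fun _ => le_rfl)
    rw [heq, hco n m k hnm hk]
    exact (iInf_le (fun j => ⨅ hj : n ≤ j, h n j hj (aa h e j)) k).trans
      (iInf_le _ (hnm.trans hk))
  · rw [iInf_neg hk, (hσ n m hnm).2.1]
    exact le_top

theorem key_t {e : ∀ n : ℕ, Ordinal.{v} → B n}
    (hdisj : ∀ (n : ℕ) (β γ : Ordinal.{v}), β ≠ γ → e n β ⊓ e n γ = ⊥)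
    (hpart : ∀ n : ℕ, (⨆ β : Ordinal.{v}, e n β) = ⊤)
    {n : ℕ} {β : Ordinal.{v}} {x : B n} (hx : ∀ γ < β, x ≤ tt e n (γ + 1)) :
    x ≤ tt e n β := by
  have hx2 : x = ⨆ δ : Ordinal.{v}, x ⊓ e n δ := by
    rw [← inf_iSup_eq, hpart n, inf_top_eq]
  refine le_trans (le_of_eq hx2) (iSup_le fun δ => ?_)
  rcases le_or_gt β δ with hβδ | hδβ
  · exact inf_le_right.trans (e_le_tt e hβδ)
  · have hlt : δ < δ + 1 := by
      rw [Ordinal.add_one_eq_succ]; exact Order.lt_succ δ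
    have h1 : x ⊓ e n δ ≤ tt e n (δ + 1) ⊓ e n δ := inf_le_inf_right _ (hx δ hδβ)
    rw [tt_inf_e hdisj hlt] at h1
    exact h1.trans bot_le

end Stmt8Aux

end Stmt8Aux

/-- Given an inverse system `⟨𝔹_n, h_{m,n} : 𝔹_n → 𝔹_m⟩_{m ≤ n}` of
complete Boolean algebras and σ-maps, and for each `n` a Boolean-valued name `ἀ_n` for an
ordinal (given by its truth values `e n β = ⟦ἀ_n = β⟧`, a pairwise disjoint family with
supremum `⊤`), the countable meet `⋀_n h_{n,0}(⟦ἀ_{n+1} < ἀ_n⟧_{h_{n+1,n}})` is `⊥`,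
where `⟦ἀ₀ < ἀ₁⟧_h = ⋁_β h(⟦ἀ₀ < β⟧) ⊓ ⟦ἀ₁ = β⟧`. -/
theorem stmt8 (B : ℕ → Type u) [∀ n, CompleteBooleanAlgebra (B n)]
    (h : ∀ m n : ℕ, m ≤ n → B n → B m)
    (hσ : ∀ (m n : ℕ) (hmn : m ≤ n), SigmaMap (h m n hmn))
    (hid : ∀ (n : ℕ) (hnn : n ≤ n) (b : B n), h n n hnn b = b)
    (hco : ∀ (m n p : ℕ) (hmn : m ≤ n) (hnp : n ≤ p) (b : B p),
      h m n hmn (h n p hnp b) = h m p (hmn.trans hnp) b)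
    (e : ∀ n : ℕ, Ordinal.{v} → B n)
    (hdisj : ∀ (n : ℕ) (β γ : Ordinal.{v}), β ≠ γ → e n β ⊓ e n γ = ⊥)
    (hpart : ∀ n : ℕ, (⨆ β : Ordinal.{v}, e n β) = ⊤) :
    (⨅ n : ℕ, h 0 n (Nat.zero_le n)
      (⨆ β : Ordinal.{v},
        h n (n + 1) (Nat.le_succ n) (⨆ γ : Ordinal.{v}, ⨆ _ : γ < β, e (n + 1) γ) ⊓ e n β))
      = ⊥ := by
  classical
  -- the main transfinite induction: `c_n ≤ h n m ⟦ἀ_m ≥ β⟧` for all `β`.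
  have main : ∀ β : Ordinal.{v}, ∀ n m : ℕ, ∀ hnm : n ≤ m,
      Stmt8Aux.cc h e n ≤ h n m hnm (Stmt8Aux.tt e m β) := by
    intro β
    induction β using Ordinal.induction with
    | h β IH =>
      have Q : ∀ n : ℕ, Stmt8Aux.cc h e n ≤ Stmt8Aux.tt e n β := by
        intro n
        refine Stmt8Aux.key_t hdisj hpart fun γ hγ => ?_
        have h1 : Stmt8Aux.cc h e n ≤
            Stmt8Aux.aa h e n ⊓ h n (n + 1) (Nat.le_succ n) (Stmt8Aux.tt e (n + 1) γ) :=
          le_inf (Stmt8Aux.cc_le_aa hid n) (IH γ hγ n (n + 1) (Nat.le_succ n))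
        exact h1.trans (Stmt8Aux.aa_inf_tt hσ hdisj)
      intro n m hnm
      exact (Stmt8Aux.cc_le_h hσ hco hnm).trans ((hσ n m hnm).mono (Q m))
  -- the goal expression is below `cc h e 0`
  have hX : (⨅ n : ℕ, h 0 n (Nat.zero_le n)
      (⨆ β : Ordinal.{v},
        h n (n + 1) (Nat.le_succ n) (⨆ γ : Ordinal.{v}, ⨆ _ : γ < β, e (n + 1) γ) ⊓ e n β))
      ≤ Stmt8Aux.cc h e 0 :=
    le_iInf fun k => le_iInf fun hk =>
      iInf_le (fun n => h 0 n (Nat.zero_le n)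
        (⨆ β : Ordinal.{v},
          h n (n + 1) (Nat.le_succ n) (⨆ γ : Ordinal.{v}, ⨆ _ : γ < β, e (n + 1) γ) ⊓ e n β)) k
  apply le_antisymm _ bot_le
  have hle : ∀ γ : Ordinal.{v},
      (⨅ n : ℕ, h 0 n (Nat.zero_le n)
        (⨆ β : Ordinal.{v},
          h n (n + 1) (Nat.le_succ n) (⨆ γ : Ordinal.{v}, ⨆ _ : γ < β, e (n + 1) γ) ⊓ e n β))
      ≤ Stmt8Aux.tt e 0 (γ + 1) := by
    intro γ
    refine (hX.trans (main (γ + 1) 0 0 le_rfl)).trans (le_of_eq ?_)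
    exact hid 0 le_rfl _
  set X := (⨅ n : ℕ, h 0 n (Nat.zero_le n)
      (⨆ β : Ordinal.{v},
        h n (n + 1) (Nat.le_succ n) (⨆ γ : Ordinal.{v}, ⨆ _ : γ < β, e (n + 1) γ) ⊓ e n β))
    with hXdef
  have hX2 : X = ⨆ δ : Ordinal.{v}, X ⊓ e 0 δ := by
    rw [← inf_iSup_eq, hpart 0, inf_top_eq]
  refine le_trans (le_of_eq hX2) (iSup_le fun δ => ?_)
  have hlt : δ < δ + 1 := by
    rw [Ordinal.add_one_eq_succ]; exact Order.lt_succ δ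
  have h1 : X ⊓ e 0 δ ≤ Stmt8Aux.tt e 0 (δ + 1) ⊓ e 0 δ := inf_le_inf_right _ (hle δ)
  rw [Stmt8Aux.tt_inf_e hdisj hlt] at h1
  exact h1
end

section
/- There is no descending sequence of pointed filters and filter comparisons ⋯ → (F_2, f_2) → (F_1, f_1) → (F_0, f_0), where a filter comparison Z : (F, f) → (G, g) between pointed filters over sets X, Y is a sequence ⟨Z_y : y ∈ Y⟩ of countably complete filters over X with F = G-lim_y Z_y and, for G-almost all y, f(x) < g(y) for Z_y-almost all x. -/
namespace FilterComparison

section Descent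

variable {α : Type*} [LT α] [WellFoundedLT α] {X : ℕ → Type*}

theorem eq_empty_of_forall_exists_lt (f : ∀ n, X n → α) (G : ∀ n, Set (X n))
    (hstep : ∀ n, ∀ y ∈ G n, ∃ x ∈ G (n + 1), f (n + 1) x < f n y) (n : ℕ) : G n = ∅ := by
  have key (a : α) : ∀ n, ∀ y ∈ G n, f n y ≠ a := by
    induction a using WellFoundedLT.induction with
    | _ a ih =>
      rintro n y hy rfl
      obtain ⟨x, hx, hlt⟩ := hstep n y hy
      exact ih _ hlt (n + 1) x hx rfl
  exact Set.eq_empty_of_forall_notMem fun y hy => key _ n y hy rfl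

end Descent

section Pullback

variable {X : ℕ → Type*} (Z : ∀ n, X n → Filter (X (n + 1)))

def pullbackIter (D : ∀ n, Set (X n)) : ℕ → ∀ n, Set (X n)
  | 0 => D
  | k + 1 => fun n => {y | pullbackIter D k (n + 1) ∈ Z n y}

theorem pullbackIter_mem {F : ∀ n, Filter (X n)} (hF : ∀ n, (F n).bind (Z n) ≤ F (n + 1))
    {D : ∀ n, Set (X n)} (hD : ∀ n, D n ∈ F n) (k n : ℕ) : pullbackIter Z D k n ∈ F n := by
  induction k generalizing n with
  | zero => exact hD n
  | succ k ih => exact Filter.mem_bind'.1 (hF n (ih (n + 1)))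

theorem iInter_pullbackIter_succ_mem {D : ∀ n, Set (X n)} {n : ℕ} {y : X n}
    (hZ : FCC (Z n y)) (hy : y ∈ ⋂ k, pullbackIter Z D k n) :
    ⋂ k, pullbackIter Z D k (n + 1) ∈ Z n y :=
  hZ _ fun k => Set.mem_iInter.1 hy (k + 1)

variable {α : Type*} [LT α] (f : ∀ n, X n → α)

def descentSet (n : ℕ) : Set (X n) := {y | {x | f (n + 1) x < f n y} ∈ Z n y}

theorem exists_lt_of_mem_iInter_pullbackIter {n : ℕ} {y : X n} [(Z n y).NeBot]
    (hZ : FCC (Z n y)) (hy : y ∈ ⋂ k, pullbackIter Z (descentSet Z f) k n) :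
    ∃ x ∈ ⋂ k, pullbackIter Z (descentSet Z f) k (n + 1), f (n + 1) x < f n y :=
  Filter.nonempty_of_mem
    (Filter.inter_mem (iInter_pullbackIter_succ_mem Z hZ hy) (Set.mem_iInter.1 hy 0))

end Pullback

end FilterComparison

open FilterComparison

/-- There is no descending sequence of pointed filters and filter
comparisons `⋯ → (F₂, f₂) → (F₁, f₁) → (F₀, f₀)`: a filter comparison
`Z : (F, f) → (G, g)` between pointed filters over `X`, `Y` is a sequence
`⟨Z_y : y ∈ Y⟩` of (proper) countably complete filters over `X` with `F = G-lim_y Z_y`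
and, for `G`-almost all `y`, `f(x) < g(y)` for `Z_y`-almost all `x`. -/
theorem stmt10 :
    ¬ ∃ (X : ℕ → Type u) (F : ∀ n, Filter (X n)) (f : ∀ n, X n → Ordinal.{v})
        (Z : ∀ n, X n → Filter (X (n + 1))),
      (∀ n, (F n).NeBot) ∧ (∀ n, FCC (F n)) ∧
      (∀ n y, (Z n y).NeBot ∧ FCC (Z n y)) ∧
      (∀ n (A : Set (X (n + 1))), A ∈ F (n + 1) ↔ {y | A ∈ Z n y} ∈ F n) ∧
      (∀ n, {y | {x | f (n + 1) x < f n y} ∈ Z n y} ∈ F n) := by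
  rintro ⟨X, F, f, Z, hFne, hFcc, hZ, hlim, hdec⟩
  have hbind : ∀ n, (F n).bind (Z n) ≤ F (n + 1) := fun n A hA =>
    Filter.mem_bind'.2 ((hlim n A).1 hA)
  set G : ∀ n, Set (X n) := fun n => ⋂ k, pullbackIter Z (descentSet Z f) k n
  have hG₀ : G 0 ∈ F 0 := hFcc 0 _ fun k => pullbackIter_mem Z hbind hdec k 0
  have hG_empty : G 0 = ∅ := eq_empty_of_forall_exists_lt f G (fun n y hy =>
    have := (hZ n y).1
    exists_lt_of_mem_iInter_pullbackIter Z f (hZ n y).2 hy) 0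
  exact (hFne 0).ne (Filter.empty_mem_iff_bot.1 (hG_empty ▸ hG₀))
end

section
/- Suppose U and W are countably complete ultrafilters over X and Y, ⟨Z_y : y ∈ Y⟩ witnesses that U is internal to W, κ is an ordinal, and g : Y → κ satisfies that for every α < κ, g(y) > α for W-almost all y. Then for any f : X → κ, the sequence ⟨Z_y⟩ is a filter comparison from (U, f) to (W, g). -/
/-- If `U`, `W` are countably complete ultrafilters over `X`, `Y`,
`⟨Z_y : y ∈ Y⟩` witnesses that `U` is internal to `W`, `κ` is an ordinal, and `g : Y → κ`
satisfies `g(y) > α` for `W`-almost all `y`, for every `α < κ`, then for any `f : X → κ`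
the sequence `⟨Z_y⟩` is a filter comparison from `(U, f)` to `(W, g)`. -/
theorem stmt11 {X : Type u} {Y : Type v} (U : Ultrafilter X) (W : Ultrafilter Y)
    (hU : CComplete U) (hW : CComplete W)
    (Z : Y → Ultrafilter X) (hZ : ∀ y, CComplete (Z y))
    (hint : ∀ R : X → Y → Prop,
      ({x | {y | R x y} ∈ W} ∈ U ↔ {y | {x | R x y} ∈ Z y} ∈ W))
    (κ : Ordinal.{w}) (g : Y → Ordinal.{w}) (hg : ∀ y, g y < κ)
    (hgbig : ∀ α < κ, {y | α < g y} ∈ W)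
    (f : X → Ordinal.{w}) (hf : ∀ x, f x < κ) :
    (∀ A : Set X, A ∈ U ↔ {y | A ∈ Z y} ∈ W) ∧
      {y | {x | f x < g y} ∈ Z y} ∈ W := by
  constructor
  · intro A
    have h := hint (fun x _ => x ∈ A)
    have e : {x | {y : Y | x ∈ A} ∈ W} = A := by
      ext x
      simp only [Set.mem_setOf_eq]
      constructor
      · intro h'
        by_contra hx
        have : {y : Y | x ∈ A} = (∅ : Set Y) := by
          ext y; simp [hx]
        rw [this] at h'
        exact Ultrafilter.empty_notMem h'
      · intro hx
        have : {y : Y | x ∈ A} = (Set.univ : Set Y) := by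
          ext y; simp [hx]
        rw [this]
        exact Filter.univ_mem
    rw [e] at h
    exact h
  · rw [← hint (fun x y => f x < g y)]
    have : {x | {y | f x < g y} ∈ W} = Set.univ := by
      ext x
      simp only [Set.mem_setOf_eq, Set.mem_univ, iff_true]
      exact hgbig (f x) (hf x)
    rw [this]
    exact Filter.univ_mem
end

section
/- Suppose U is an ultrafilter over a set X, κ = crit(j_U), γ ≥ κ is an ordinal, ⟨S_x : x ∈ X⟩ is a γ-supercompactness sequence for U with sup S_x < γ for all x ∈ X. Then the function f : X → γ defined by f(x) = sup(S_x ∩ γ) is cofinal in γ. -/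
/-- If `U` is an ultrafilter over `X` with critical point `κ`
(`κ`-complete but not `κ⁺`-complete), `γ ≥ κ` is an ordinal, and `⟨S_x : x ∈ X⟩` is a
`γ`-supercompactness sequence for `U` with `sup S_x < γ` for all `x`, then
`f(x) = sup (S_x ∩ γ)` is cofinal in `γ`. -/
theorem stmt18 {X : Type u} (U : Ultrafilter X) (κ : Cardinal.{u})
    (hcomp : ∀ (ι : Type u) (s : ι → Set X),
      Cardinal.mk ι < κ → (∀ i, s i ∈ U) → (⋂ i, s i) ∈ U)
    (hnot : ¬ ∀ (ι : Type u) (s : ι → Set X),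
      Cardinal.mk ι < Order.succ κ → (∀ i, s i ∈ U) → (⋂ i, s i) ∈ U)
    (γ : Ordinal.{u}) (hγ : κ.ord ≤ γ)
    (S : X → Set Ordinal.{u})
    (hsub : ∀ x, S x ⊆ Set.Iio γ)
    (hmem : ∀ α < γ, {x | α ∈ S x} ∈ U)
    (hconst : ∀ a : X → Ordinal.{u}, {x | a x ∈ S x} ∈ U →
      ∃ c < γ, {x | a x = c} ∈ U)
    (hbd : ∀ x, sSup (S x) < γ) :
    ∀ β < γ, ∃ x, β ≤ sSup (S x ∩ Set.Iio γ) := by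
  intro β hβ
  obtain ⟨x, hx⟩ := Ultrafilter.nonempty_of_mem (hmem β hβ)
  exact ⟨x, le_csSup ⟨γ, fun a ha => le_of_lt ha.2⟩ ⟨hx, hβ⟩⟩
end
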